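/- Suppose 1 ≤ LF[i] ≤ n−1 (equivalently SUF[i] ≠ 0 and LF[i] ≥ 1) and there is no index j < i with BWT[j] = BWT[i]. Then LCP[LF[i]] = 0; that is, S_{SUF[LF[i]]} is the lexicographically smallest suffix among all suffixes having BWT[i] as first character, so its longest common prefix with the lexicographically preceding suffix has length 0. -/
import Mathlib


/-- Length of the longest common prefix of two lists. -/
def lcpLen {α : Type*} [DecidableEq α] : List α → List α → ℕ
  | a :: u, b :: v => if a = b then lcpLen u v + 1 else 0
  | _, _ => 0

/-- The suffix of `S` starting at position `i` (as a list). -/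
def sfx {α : Type*} {n : ℕ} (S : Fin n → α) (i : ℕ) : List α :=
  (List.ofFn S).drop i
/-- Burrows–Wheeler transform: `BWT[i] = S[SUF[i]-1]` if `SUF[i] ≠ 0`,
    and the sentinel `S[n-1]` otherwise. -/
def bwtOf {α : Type*} {n : ℕ} (hn : 0 < n) (S : Fin n → α)
    (SUF : Equiv.Perm (Fin n)) (i : Fin n) : α :=
  if (SUF i : ℕ) = 0 then S ⟨n - 1, by omega⟩
  else S ⟨(SUF i : ℕ) - 1, lt_of_le_of_lt (Nat.sub_le _ _) (Fin.isLt _)⟩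

/-- LF-mapping: `LF[i] = ISA[SUF[i]-1]` if `SUF[i] ≠ 0`, and `0` otherwise. -/
def lfOf {n : ℕ} (hn : 0 < n) (SUF : Equiv.Perm (Fin n)) (i : Fin n) : Fin n :=
  if (SUF i : ℕ) = 0 then ⟨0, hn⟩
  else SUF.symm ⟨(SUF i : ℕ) - 1, lt_of_le_of_lt (Nat.sub_le _ _) (Fin.isLt _)⟩


private theorem lexAsymm {α : Type*} [LinearOrder α] :
    ∀ {l m : List α}, List.Lex (· < ·) l m → List.Lex (· < ·) m l → False := by
  intro l m h
  induction h with
  | nil => intro h2; cases h2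
  | @cons a l m h ih =>
    intro h2
    cases h2 with
    | cons h3 => exact ih h3
    | rel h3 => exact lt_irrefl _ h3
  | @rel a l b m h =>
    intro h2
    cases h2 with
    | cons h3 => exact lt_irrefl _ h
    | rel h3 => exact lt_irrefl _ (h.trans h3)

private theorem sfx_cons {α : Type*} {n : ℕ} (S : Fin n → α) (q : ℕ) (hq : q < n) :
    sfx S q = S ⟨q, hq⟩ :: sfx S (q + 1) := by
  unfold sfx
  rw [List.drop_eq_getElem_cons (by simpa using hq)]
  simp

/-- If `SUF[i] ≠ 0`, `LF[i] ≥ 1`, and no `j < i` satisfies `BWT[j] = BWT[i]`,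
then `LCP[LF[i]] = 0`. -/
theorem lcp_lf_eq_zero_of_no_prev {α : Type*} [LinearOrder α] {n : ℕ} (hn : 0 < n)
    (S : Fin n → α)
    (hsent : ∀ k : Fin n, (k : ℕ) < n - 1 → S ⟨n - 1, by omega⟩ < S k)
    (SUF : Equiv.Perm (Fin n))
    (hSUF : ∀ i j : Fin n, i < j →
      List.Lex (· < ·) (sfx S ((SUF i : Fin n) : ℕ)) (sfx S ((SUF j : Fin n) : ℕ)))
    (LCP : ℕ → ℕ)
    (hLCP : ∀ l, ∀ _ : 1 ≤ l, ∀ h2 : l < n,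
      LCP l = lcpLen (sfx S ((SUF ⟨l - 1, by omega⟩ : Fin n) : ℕ))
                     (sfx S ((SUF ⟨l, h2⟩ : Fin n) : ℕ)))
    (i : Fin n) (hi0 : (SUF i : ℕ) ≠ 0)
    (hlf1 : 1 ≤ ((lfOf hn SUF i : Fin n) : ℕ))
    (hnoprev : ¬ ∃ j : Fin n, j < i ∧ bwtOf hn S SUF j = bwtOf hn S SUF i) :
    LCP ((lfOf hn SUF i : Fin n) : ℕ) = 0 := by
  set s : ℕ := (SUF i : ℕ) with hs
  have hsn : s < n := (SUF i).isLt
  have hs1 : 1 ≤ s := Nat.one_le_iff_ne_zero.mpr hi0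
  have hsm : s - 1 < n := by omega
  have hLdef : lfOf hn SUF i = SUF.symm ⟨s - 1, hsm⟩ := by
    unfold lfOf
    rw [if_neg hi0]
  rw [hLdef] at hlf1 ⊢
  obtain ⟨L, hLdef2⟩ : ∃ L : Fin n, SUF.symm ⟨s - 1, hsm⟩ = L := ⟨_, rfl⟩
  rw [hLdef2] at hlf1 ⊢
  have hLn : (L : ℕ) < n := L.isLt
  have hSUFL : SUF L = ⟨s - 1, hsm⟩ := by
    rw [← hLdef2, Equiv.apply_symm_apply]
  rw [hLCP (L : ℕ) hlf1 hLn]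
  have hLeta : (⟨(L : ℕ), hLn⟩ : Fin n) = L := rfl
  rw [hLeta, hSUFL]
  set P : Fin n := ⟨(L : ℕ) - 1, by omega⟩ with hP
  have hPL : P < L := by
    rw [Fin.lt_def]; simp [hP]; omega
  have hlex := hSUF P L hPL
  rw [hSUFL] at hlex
  set q : ℕ := ((SUF P : Fin n) : ℕ) with hq
  have hqn : q < n := (SUF P).isLt
  have hs1n : s - 1 < n := by omega
  rw [sfx_cons S q hqn, sfx_cons S (s - 1) hs1n]
  rw [sfx_cons S q hqn, sfx_cons S (s - 1) hs1n] at hlex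
  unfold lcpLen
  rw [if_neg]
  intro heq
  -- first characters equal: S⟨q⟩ = S⟨s-1⟩
  have hsm1 : s - 1 < n - 1 := by omega
  have hqne : q ≠ n - 1 := by
    intro h
    have := hsent ⟨s - 1, hs1n⟩ hsm1
    rw [← heq] at this
    have : S ⟨n - 1, by omega⟩ < S ⟨q, hqn⟩ := this
    rw [show (⟨q, hqn⟩ : Fin n) = ⟨n - 1, by omega⟩ from by simp [h]] at this
    exact lt_irrefl _ this
  have hq1n : q + 1 < n := by omega
  have hlex2 : List.Lex (· < ·) (sfx S (q + 1)) (sfx S s) := by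
    rw [heq] at hlex
    cases hlex with
    | cons h3 => rwa [show s - 1 + 1 = s from by omega] at h3
    | rel h3 => exact absurd h3 (lt_irrefl _)
  set j : Fin n := SUF.symm ⟨q + 1, hq1n⟩ with hj
  have hSUFj : ((SUF j : Fin n) : ℕ) = q + 1 := by
    rw [hj, Equiv.apply_symm_apply]
  have hji : j < i := by
    rcases lt_trichotomy j i with h | h | h
    · exact h
    · exfalso
      have : q + 1 = s := by
        rw [← hSUFj, h, ← hs]
      rw [this] at hlex2
      exact lexAsymm hlex2 hlex2
    · exfalso
      have h2 := hSUF i j h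
      rw [hSUFj, ← hs] at h2
      exact lexAsymm hlex2 h2
  apply hnoprev
  refine ⟨j, hji, ?_⟩
  have hbj : bwtOf hn S SUF j = S ⟨q, hqn⟩ := by
    simp only [bwtOf, hSUFj]
    norm_num
  have hbi : bwtOf hn S SUF i = S ⟨s - 1, hs1n⟩ := by
    simp only [bwtOf, ← hs, if_neg hi0]
  rw [hbj, hbi, heq]
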